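/- arXiv:1412.7217 — 3 statements merged into one kernel-verified Lean document; each statement's English description precedes it below -/
import Mathlib

section
/- Let b⁰_0,…,b⁰_{d_x−1} be an integral basis over K[x] and b^∞_0,…,b^∞_{d_x−1} an integral basis over K[1/x], and let W ∈ GL_{d_x}(K[x,1/x]) be the change-of-basis matrix determined by b^∞_j = Σ_{i=0}^{d_x−1} W_{i+1,j+1} b⁰_i. Define the K-subspaces E_0 = { (Σ_i u_i(x) b⁰_i)·dx/r : u ∈ K[x]^{d_x} } and E_∞ = { (Σ_i u_i(x,1/x) b^∞_i)·dx/r : u ∈ K[x,1/x]^{d_x}, ord_∞(u) > ord_0(W) − deg r + 1 } of Ω¹_{L/K}, and the K-subspaces B_0 = { Σ_i v_i(x) b⁰_i : v ∈ K[x]^{d_x} } and B_∞ = { Σ_i v_i(x,1/x) b^∞_i : v ∈ K[x,1/x]^{d_x}, ord_∞(v) > ord_0(W) } of L. Then E_0 ∩ E_∞ and d(B_0 ∩ B_∞) are finite-dimensional K-vector spaces. -/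
open Polynomial
open scoped Classical

/-- The Sylvester matrix of two polynomials `f, g ∈ R[y]`, where `f` is regarded as having
degree (at most) `m` and `g` as having degree (at most) `n`. -/
noncomputable def sylvesterMatrix {R : Type*} [CommRing R] (f g : Polynomial R) (m n : ℕ) :
    Matrix (Fin (n + m)) (Fin (n + m)) R :=
  Matrix.of fun i j =>
    if (j : ℕ) < n then
      (if (j : ℕ) ≤ (i : ℕ) then f.coeff ((i : ℕ) - (j : ℕ)) else 0)
    else
      (if (j : ℕ) - n ≤ (i : ℕ) then g.coeff ((i : ℕ) - ((j : ℕ) - n)) else 0)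

/-- The resultant of `f` and `g` (regarded as having degrees `m` and `n` respectively). -/
noncomputable def resultant {R : Type*} [CommRing R] (f g : Polynomial R) (m n : ℕ) : R :=
  (sylvesterMatrix f g m n).det

/-- A Laurent polynomial, encoded as a finitely supported function `ℤ →₀ K` of
coefficients, viewed as a rational function: `f ↦ ∑ k, f k • x^k`. -/
noncomputable def laurentToRatFunc {K : Type*} [Field K] (f : ℤ →₀ K) : RatFunc K :=
  f.sum fun k a => RatFunc.C a * (RatFunc.X : RatFunc K) ^ k

/-!
If `∑ uᵢ b⁰ᵢ = ∑ vⱼ b^∞ⱼ` with polynomial `u` and Laurent `v`, comparing coordinates in the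
basis `b⁰` gives `u = W v`, so the valuation at infinity bounds every `deg uᵢ` by the top degree
of `W` minus `ord_∞ v`. Hence `B₀ ∩ B_∞` lies in the finite-dimensional space of polynomial
combinations of `b⁰` of bounded degree, and so does its image under `d`. Multiplication by
`dx/r` is either zero or injective, so `E₀ ∩ E_∞` lies in the image of such an intersection,
with the bound on `ord_∞ v` shifted by `1 - deg r`.
-/

open RatFunc WithZero
open scoped Matrix

section LaurentDegree

variable {K : Type*} [Field K]

theorem inftyValuation_laurentToRatFunc_le {f : ℤ →₀ K} {E : ℤ} (hf : ∀ k ∈ f.support, k ≤ E) :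
    inftyValuation K (laurentToRatFunc f) ≤ exp E := by
  refine Valuation.map_sum_le _ fun k hk => ?_
  rw [Valuation.map_mul, inftyValuation.C _ (Finsupp.mem_support_iff.mp hk), one_mul,
    inftyValuation.X_zpow]
  exact exp_le_exp.mpr (hf k hk)

theorem degree_lt_of_inftyValuation_lt {p : K[X]} {n : ℕ}
    (hp : inftyValuation K (algebraMap K[X] (RatFunc K) p) < exp (n : ℤ)) : p.degree < n := by
  rcases eq_or_ne p 0 with rfl | hp0
  · exact degree_zero.trans_lt (WithBot.bot_lt_coe n)
  rw [inftyValuation_apply, inftyValuation.polynomial K hp0, exp_lt_exp, Nat.cast_lt] at hp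
  exact (natDegree_lt_iff_degree_lt hp0).mp hp

end LaurentDegree

theorem LinearIndependent.eq_mulVec_of_sum_smul_eq {R M ι κ : Type*} [CommRing R]
    [AddCommGroup M] [Module R M] [Fintype ι] [Fintype κ] {b : ι → M}
    (hb : LinearIndependent R b) {b' : κ → M} {W : Matrix ι κ R}
    (hW : ∀ j, b' j = ∑ i, W i j • b i) {a : ι → R} {a' : κ → R}
    (h : ∑ i, a i • b i = ∑ j, a' j • b' j) : a = W *ᵥ a' := by
  have hzero : ∑ i, (a - W *ᵥ a') i • b i = 0 := by
    simp only [Pi.sub_apply, sub_smul, Finset.sum_sub_distrib, h, hW, Finset.smul_sum, smul_smul,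
      Matrix.mulVec, dotProduct, Finset.sum_smul]
    rw [Finset.sum_comm, sub_eq_zero]
    simp only [mul_comm]
  funext i
  exact sub_eq_zero.mp (Fintype.linearIndependent_iff.mp hb _ hzero i)

section Combinations

variable (K : Type*) {L ι κ : Type*} [Field K] [Ring L] [Algebra (RatFunc K) L] [Fintype ι]
  [Fintype κ]

def polyCombos (b : ι → L) : Set L :=
  {f | ∃ u : ι → K[X], f = ∑ i, algebraMap (RatFunc K) L (algebraMap K[X] (RatFunc K) (u i)) * b i}

def laurentCombos (b : κ → L) (t : ℤ) : Set L :=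
  {f | ∃ v : κ → (ℤ →₀ K), (∀ j, ∀ k ∈ (v j).support, t < -k) ∧
    f = ∑ j, algebraMap (RatFunc K) L (laurentToRatFunc (v j)) * b j}

theorem zero_mem_polyCombos (b : ι → L) : 0 ∈ polyCombos K b :=
  ⟨0, by simp⟩

theorem zero_mem_laurentCombos (b : κ → L) (t : ℤ) : 0 ∈ laurentCombos K b t :=
  ⟨0, by simp, by simp [laurentToRatFunc]⟩

variable [Algebra K L] [IsScalarTower K (RatFunc K) L]

noncomputable def polyCombination (b : ι → L) : (ι → K[X]) →ₗ[K] L :=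
  ∑ i, LinearMap.mulRight K (b i) ∘ₗ
    ((IsScalarTower.toAlgHom K (RatFunc K) L).comp
      (IsScalarTower.toAlgHom K K[X] (RatFunc K))).toLinearMap ∘ₗ LinearMap.proj i

theorem polyCombination_apply (b : ι → L) (u : ι → K[X]) :
    polyCombination K b u
      = ∑ i, algebraMap (RatFunc K) L (algebraMap K[X] (RatFunc K) (u i)) * b i := by
  simp [polyCombination]

variable {K}

theorem mem_degreeLT_of_polyCombination_mem_laurentCombos {b : ι → L} {b' : κ → L}
    (hb : LinearIndependent (RatFunc K) b) {W : Matrix ι κ (ℤ →₀ K)}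
    (hW : ∀ j, b' j = ∑ i, algebraMap (RatFunc K) L (laurentToRatFunc (W i j)) * b i)
    {D : ℤ} (hD : ∀ i j, ∀ k ∈ (W i j).support, k ≤ D) {t : ℤ} {u : ι → K[X]}
    (hu : polyCombination K b u ∈ laurentCombos K b' t) (i : ι) :
    u i ∈ K[X]_((D - t).toNat) := by
  obtain ⟨v, hv, h⟩ := hu
  have hcoord := hb.eq_mulVec_of_sum_smul_eq (W := W.map laurentToRatFunc)
    (a := fun i => algebraMap K[X] (RatFunc K) (u i)) (a' := fun j => laurentToRatFunc (v j))
    (by simpa only [Algebra.smul_def, Matrix.map_apply] using hW)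
    (by simpa only [Algebra.smul_def, polyCombination_apply] using h)
  rw [mem_degreeLT]
  apply degree_lt_of_inftyValuation_lt
  calc inftyValuation K (algebraMap K[X] (RatFunc K) (u i))
      = inftyValuation K (∑ j, laurentToRatFunc (W i j) * laurentToRatFunc (v j)) := by
        rw [congrFun hcoord i]; rfl
    _ ≤ exp (D + (-t - 1)) := by
        refine Valuation.map_sum_le _ fun j _ => ?_
        rw [Valuation.map_mul, exp_add]
        exact mul_le_mul' (inftyValuation_laurentToRatFunc_le (hD i j))
          (inftyValuation_laurentToRatFunc_le fun k hk => by linarith [hv j k hk])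
    _ < exp (D - t) := exp_lt_exp.mpr (by omega)
    _ ≤ exp ((D - t).toNat : ℤ) := exp_le_exp.mpr (Int.self_le_toNat _)

theorem finiteDimensional_span_polyCombos_inter_laurentCombos {b : ι → L} {b' : κ → L}
    (hb : LinearIndependent (RatFunc K) b) {W : Matrix ι κ (ℤ →₀ K)}
    (hW : ∀ j, b' j = ∑ i, algebraMap (RatFunc K) L (laurentToRatFunc (W i j)) * b i) (t : ℤ) :
    FiniteDimensional K (Submodule.span K (polyCombos K b ∩ laurentCombos K b' t)) := by
  obtain ⟨D, hD⟩ : ∃ D : ℤ, ∀ i j, ∀ k ∈ (W i j).support, k ≤ D := by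
    obtain ⟨D, hD⟩ := Finset.exists_le (Finset.univ.biUnion fun p : ι × κ => (W p.1 p.2).support)
    exact ⟨D, fun i j k hk => hD k (Finset.mem_biUnion.mpr ⟨(i, j), Finset.mem_univ _, hk⟩)⟩
  set n := (D - t).toNat
  have : FiniteDimensional K K[X]_n := (degreeLTEquiv K n).symm.finiteDimensional
  let g := polyCombination K b ∘ₗ LinearMap.piMap fun _ => (K[X]_n).subtype
  refine Submodule.finiteDimensional_of_le (S₂ := LinearMap.range g) (Submodule.span_le.mpr ?_)
  rintro f ⟨⟨u, rfl⟩, hf⟩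
  rw [← polyCombination_apply] at hf ⊢
  exact ⟨fun i => ⟨u i, mem_degreeLT_of_polyCombination_mem_laurentCombos hb hW hD hf i⟩, rfl⟩

end Combinations

theorem finiteDimensional_span_inter_of_subset_image_smul {K L M : Type*} [Field K] [Field L]
    [Algebra K L] [AddCommGroup M] [Module L M] [Module K M] [IsScalarTower K L M] (w : M)
    {S T : Set L} (hS : 0 ∈ S) (hT : 0 ∈ T) [FiniteDimensional K (Submodule.span K (S ∩ T))]
    {E F : Set M} (hE : E ⊆ (· • w) '' S) (hF : F ⊆ (· • w) '' T) :
    FiniteDimensional K (Submodule.span K (E ∩ F)) := by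
  have hsub : (· • w) '' S ∩ (· • w) '' T ⊆ (· • w) '' (S ∩ T) := by
    rcases eq_or_ne w 0 with rfl | hw
    · rintro _ ⟨⟨x, -, rfl⟩, -⟩
      exact ⟨0, ⟨hS, hT⟩, by simp⟩
    · exact (Set.image_inter (smul_left_injective L hw)).ge
  have : FiniteDimensional K (Submodule.span K ((· • w) '' (S ∩ T))) := by
    change FiniteDimensional K
      (Submodule.span K (((LinearMap.toSpanSingleton L M w).restrictScalars K) '' (S ∩ T)))
    rw [Submodule.span_image]
    infer_instance
  exact Submodule.finiteDimensional_of_le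
    (Submodule.span_mono ((Set.inter_subset_inter hE hF).trans hsub))

theorem finite_dimensionality_of_E_and_dB_general {K L : Type*} [Field K]
    [Field L] [Algebra (RatFunc K) L] [Algebra K L] [IsScalarTower K (RatFunc K) L]
    (dx : ℕ)
    (r : Polynomial K)
    (b0 : Fin dx → L)
    (hb0_li : LinearIndependent (RatFunc K) b0)
    (binf : Fin dx → L)
    (W : Matrix (Fin dx) (Fin dx) (ℤ →₀ K))
    (hW : ∀ j, binf j = ∑ i, algebraMap (RatFunc K) L (laurentToRatFunc (W i j)) * b0 i)
    (c : ℤ) :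
    FiniteDimensional K
      ↥(Submodule.span K
        (({ω | ∃ u : Fin dx → Polynomial K,
            ω = ((∑ i, algebraMap (RatFunc K) L (algebraMap (Polynomial K) (RatFunc K) (u i))
                    * b0 i) /
                  algebraMap (RatFunc K) L (algebraMap (Polynomial K) (RatFunc K) r)) •
                (KaehlerDifferential.D K L) (algebraMap (RatFunc K) L RatFunc.X)} :
            Set (Ω[L⁄K])) ∩
         {ω | ∃ u : Fin dx → (ℤ →₀ K),
            (∀ i, ∀ k ∈ (u i).support, c - (r.natDegree : ℤ) + 1 < -k) ∧
            ω = ((∑ i, algebraMap (RatFunc K) L (laurentToRatFunc (u i)) * binf i) /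
                  algebraMap (RatFunc K) L (algebraMap (Polynomial K) (RatFunc K) r)) •
                (KaehlerDifferential.D K L) (algebraMap (RatFunc K) L RatFunc.X)})) ∧
    FiniteDimensional K
      ↥(Submodule.span K
        (⇑(KaehlerDifferential.D K L) ''
          (({f | ∃ v : Fin dx → Polynomial K,
              f = ∑ i, algebraMap (RatFunc K) L (algebraMap (Polynomial K) (RatFunc K) (v i))
                    * b0 i} : Set L) ∩
           {f | ∃ v : Fin dx → (ℤ →₀ K),
              (∀ i, ∀ k ∈ (v i).support, c < -k) ∧
              f = ∑ i, algebraMap (RatFunc K) L (laurentToRatFunc (v i)) * binf i}))) := by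
  have hfin := finiteDimensional_span_polyCombos_inter_laurentCombos hb0_li hW
  set w : Ω[L⁄K] := (algebraMap (RatFunc K) L (algebraMap K[X] (RatFunc K) r))⁻¹ •
    KaehlerDifferential.D K L (algebraMap (RatFunc K) L RatFunc.X)
  constructor
  · have := hfin (c - r.natDegree + 1)
    refine finiteDimensional_span_inter_of_subset_image_smul w (zero_mem_polyCombos K b0)
      (zero_mem_laurentCombos K binf (c - r.natDegree + 1)) ?_ ?_
    · rintro _ ⟨u, rfl⟩
      exact ⟨_, ⟨u, rfl⟩, by rw [div_eq_mul_inv, mul_smul]⟩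
    · rintro _ ⟨v, hv, rfl⟩
      exact ⟨_, ⟨v, hv, rfl⟩, by rw [div_eq_mul_inv, mul_smul]⟩
  · have := hfin c
    change FiniteDimensional K (Submodule.span K
      ((KaehlerDifferential.D K L : L →ₗ[K] Ω[L⁄K]) '' (polyCombos K b0 ∩ laurentCombos K binf c)))
    rw [Submodule.span_image]
    infer_instance

/-- **Finite dimensionality of `E₀ ∩ E_∞` and `d(B₀ ∩ B_∞)`** (part of Theorem 3.6 of
the paper).  Setup: `K` a field of characteristic zero, `Q ∈ K[x][y]` monic in `y` of
degree `d_x ≥ 1` and irreducible over `K(x)`, `L = K(x)[y]/(Q)` (presented as a field `L`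
with a generating root `y` of `Q`), `Δ` the discriminant of `Q` with respect to `y` and
`r` its squarefree part, `b⁰` an integral basis for `L` over `K[x]`, `b^∞` an integral
basis for `L` over `K[1/x]`, `W` the change-of-basis matrix (with Laurent polynomial
entries, encoded as finitely supported coefficient functions `ℤ →₀ K`) with
`b^∞ j = ∑ i, W i j • b⁰ i`, and `c = ord₀(W)` the minimal degree appearing in the
entries of `W`.  With
`E₀ = { (∑ u i • b⁰ i)·dx/r : u polynomial }`,
`E_∞ = { (∑ u i • b^∞ i)·dx/r : u Laurent, ord_∞ u > ord₀(W) - deg r + 1 }`,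
`B₀ = { ∑ v i • b⁰ i : v polynomial }`,
`B_∞ = { ∑ v i • b^∞ i : v Laurent, ord_∞ v > ord₀(W) }`,
the `K`-vector spaces spanned by `E₀ ∩ E_∞ ⊆ Ω¹_{L/K}` and by
`d(B₀ ∩ B_∞) ⊆ Ω¹_{L/K}` are finite dimensional. -/
theorem finite_dimensionality_of_E_and_dB {K L : Type*} [Field K] [CharZero K]
    [Field L] [Algebra (RatFunc K) L] [Algebra K L] [IsScalarTower K (RatFunc K) L]
    (dx : ℕ) (hdx : 1 ≤ dx)
    (Q : Polynomial (Polynomial K)) (hQM : Q.Monic) (hQdeg : Q.natDegree = dx)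
    (hQirr : Irreducible (Q.map (algebraMap (Polynomial K) (RatFunc K))))
    (y : L) (hy : Polynomial.aeval y (Q.map (algebraMap (Polynomial K) (RatFunc K))) = 0)
    (hgen : Algebra.adjoin (RatFunc K) {y} = ⊤)
    (Δ r : Polynomial K)
    (hΔ : Δ = _root_.resultant Q (Polynomial.derivative Q) dx (dx - 1)) (hΔ0 : Δ ≠ 0)
    (hr : r = Δ / EuclideanDomain.gcd Δ (Polynomial.derivative Δ))
    (b0 : Fin dx → L)
    (hb0_li : LinearIndependent (RatFunc K) b0)
    (hb0_span : Submodule.span (RatFunc K) (Set.range b0) = ⊤)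
    (hb0_int : ∀ z : L,
      (∃ c : Fin dx → Polynomial K,
          z = ∑ i, algebraMap (RatFunc K) L (algebraMap (Polynomial K) (RatFunc K) (c i)) * b0 i)
        ↔ ((algebraMap (RatFunc K) L).comp
            (algebraMap (Polynomial K) (RatFunc K))).IsIntegralElem z)
    (binf : Fin dx → L)
    (hbinf_li : LinearIndependent (RatFunc K) binf)
    (hbinf_span : Submodule.span (RatFunc K) (Set.range binf) = ⊤)
    (hbinf_int : ∀ z : L,
      (∃ c : Fin dx → Polynomial K,
          z = ∑ i, algebraMap (RatFunc K) L
            (Polynomial.aeval ((RatFunc.X : RatFunc K)⁻¹) (c i)) * binf i)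
        ↔ ((algebraMap (RatFunc K) L).comp
            (Polynomial.aeval ((RatFunc.X : RatFunc K)⁻¹) :
              Polynomial K →ₐ[K] RatFunc K).toRingHom).IsIntegralElem z)
    (W : Matrix (Fin dx) (Fin dx) (ℤ →₀ K))
    (hW : ∀ j, binf j = ∑ i, algebraMap (RatFunc K) L (laurentToRatFunc (W i j)) * b0 i)
    (c : ℤ) (hc : IsLeast {k : ℤ | ∃ i j, k ∈ (W i j).support} c) :
    FiniteDimensional K
      ↥(Submodule.span K
        (({ω | ∃ u : Fin dx → Polynomial K,
            ω = ((∑ i, algebraMap (RatFunc K) L (algebraMap (Polynomial K) (RatFunc K) (u i))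
                    * b0 i) /
                  algebraMap (RatFunc K) L (algebraMap (Polynomial K) (RatFunc K) r)) •
                (KaehlerDifferential.D K L) (algebraMap (RatFunc K) L RatFunc.X)} :
            Set (Ω[L⁄K])) ∩
         {ω | ∃ u : Fin dx → (ℤ →₀ K),
            (∀ i, ∀ k ∈ (u i).support, c - (r.natDegree : ℤ) + 1 < -k) ∧
            ω = ((∑ i, algebraMap (RatFunc K) L (laurentToRatFunc (u i)) * binf i) /
                  algebraMap (RatFunc K) L (algebraMap (Polynomial K) (RatFunc K) r)) •
                (KaehlerDifferential.D K L) (algebraMap (RatFunc K) L RatFunc.X)})) ∧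
    FiniteDimensional K
      ↥(Submodule.span K
        (⇑(KaehlerDifferential.D K L) ''
          (({f | ∃ v : Fin dx → Polynomial K,
              f = ∑ i, algebraMap (RatFunc K) L (algebraMap (Polynomial K) (RatFunc K) (v i))
                    * b0 i} : Set L) ∩
           {f | ∃ v : Fin dx → (ℤ →₀ K),
              (∀ i, ∀ k ∈ (v i).support, c < -k) ∧
              f = ∑ i, algebraMap (RatFunc K) L (laurentToRatFunc (v i)) * binf i}))) :=
  finite_dimensionality_of_E_and_dB_general dx r b0 hb0_li binf W hW c
end

section
/- Let R be a commutative ring and let Q ∈ R[x][y] be monic in y of degree d_x ≥ 1 such that every coefficient of Q (as a polynomial in y with coefficients in R[x]) has degree at most d_y in x, and let Δ(x) ∈ R[x] be the resultant of Q and ∂Q/∂y with respect to y. Then there exists a polynomial s ∈ R[x,y] with deg_y(s) ≤ d_x − 1 and deg_x(s) ≤ 2(d_x − 1)·d_y such that s·(∂Q/∂y) ≡ Δ(x) modulo the ideal generated by Q in R[x,y]. -/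
/-!
The resultant is the determinant of the Sylvester matrix `S` of `Q` and `∂Q/∂y`, so Cramer's rule
`S · adj S = Δ · I`, applied to the constant polynomial `1`, yields `a, s` with
`a · Q + s · ∂Q/∂y = Δ` and `deg_y s < d_x`. The coefficients of `s` are entries of `adj S`, i.e.
minors of order `2 d_x - 2` of a matrix whose entries are coefficients of `Q` or `∂Q/∂y`, hence of
`x`-degree at most `d_y`.
-/

open Polynomial

section
variable {A : Type*} [CommRing A]

-- Mathlib's `sylvester` puts the shifts of its first argument first, hence the swap of `f`, `g`.
theorem sylvesterMatrix_eq_sylvester {f g : A[X]} {m n : ℕ} (hf : f.natDegree ≤ m)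
    (hg : g.natDegree ≤ n) : sylvesterMatrix f g m n = sylvester g f n m := by
  ext i j
  refine Fin.addCases (fun j => ?_) (fun j => ?_) j
  · simp only [sylvesterMatrix, sylvester, Matrix.of_apply, Fin.addCases_left, Fin.val_castAdd,
      Fin.is_lt, if_true, Set.mem_Icc, ite_and]
    split_ifs <;> first | rfl | exact coeff_eq_zero_of_natDegree_lt (by omega)
  · simp only [sylvesterMatrix, sylvester, Matrix.of_apply, Fin.addCases_right, Fin.val_natAdd,
      Nat.not_lt_of_le (Nat.le_add_right _ _), if_false, add_tsub_cancel_left, Set.mem_Icc, ite_and]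
    split_ifs <;> first | rfl | exact coeff_eq_zero_of_natDegree_lt (by omega)

theorem coeff_adjSylvester_snd {f g : A[X]} {m n : ℕ} (P : A[X]_(m + n)) (k : Fin n) :
    ((adjSylvester f g P).2 : A[X]).coeff k =
      ∑ j, (sylvester f g m n).adjugate (Fin.natAdd m k) j * (P : A[X]).coeff j := by
  have := congr_fun (Matrix.repr_toLin (degreeLT.basis A (m + n)) (degreeLT.basisProd A m n)
    (sylvester f g m n).adjugate P) (Fin.natAdd m k)
  simpa [Matrix.mulVec, dotProduct, degreeLT.basisProd, adjSylvester] using this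

theorem natDegree_det_le_sum {ι : Type*} [Fintype ι] [DecidableEq ι] (M : Matrix ι ι A[X])
    (B : ι → ℕ) (h : ∀ i j, (M i j).natDegree ≤ B i) : M.det.natDegree ≤ ∑ i, B i := by
  rw [Matrix.det_apply']
  refine natDegree_sum_le_of_forall_le _ _ fun σ _ => ?_
  calc ((Equiv.Perm.sign σ : ℤ) * ∏ i, M (σ i) i : A[X]).natDegree
      ≤ ∑ i, (M (σ i) i).natDegree := by
        refine natDegree_mul_le.trans ?_
        rw [natDegree_intCast, zero_add]
        exact natDegree_prod_le _ _
    _ ≤ ∑ i, B (σ i) := Finset.sum_le_sum fun i _ => h _ _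
    _ = ∑ i, B i := Equiv.sum_comp σ B

theorem natDegree_adjugate_apply_le {ι : Type*} [Fintype ι] [DecidableEq ι] {M : Matrix ι ι A[X]}
    {d : ℕ} (h : ∀ i j, (M i j).natDegree ≤ d) (i j : ι) :
    (M.adjugate i j).natDegree ≤ (Fintype.card ι - 1) * d := by
  rw [Matrix.adjugate_apply]
  refine (natDegree_det_le_sum _ (fun k => if k = j then 0 else d) fun k l => ?_).trans ?_
  · rcases eq_or_ne k j with rfl | hk
    · rw [Matrix.updateRow_self, if_pos rfl, Pi.single_apply]
      split_ifs <;> simp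
    · rw [Matrix.updateRow_ne hk, if_neg hk]
      exact h k l
  · simp [Finset.sum_ite, Finset.filter_ne']

theorem natDegree_sylvester_apply_le {f g : A[X][X]} {d : ℕ} (hf : ∀ k, (f.coeff k).natDegree ≤ d)
    (hg : ∀ k, (g.coeff k).natDegree ≤ d) (m n : ℕ) (i j : Fin (m + n)) :
    (sylvester f g m n i j).natDegree ≤ d := by
  refine Fin.addCases (fun j => ?_) (fun j => ?_) j <;>
    simp only [sylvester, Matrix.of_apply, Fin.addCases_left, Fin.addCases_right] <;>
    split_ifs <;> simp [hf, hg]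

theorem natDegree_coeff_derivative_le {f : A[X][X]} {d : ℕ} (hf : ∀ k, (f.coeff k).natDegree ≤ d)
    (k : ℕ) : ((derivative f).coeff k).natDegree ≤ d := by
  rw [coeff_derivative]
  refine natDegree_mul_le.trans ?_
  rw [← Nat.cast_add_one, natDegree_natCast, add_zero]
  exact hf (k + 1)

theorem natDegree_coeff_adjSylvester_one_snd_le {f g : A[X][X]} {m n d : ℕ}
    (h : ∀ i j, (sylvester f g m n i j).natDegree ≤ d) (h1 : (1 : A[X][X]) ∈ A[X][X]_(m + n))
    (k : ℕ) : (((adjSylvester f g ⟨1, h1⟩).2 : A[X][X]).coeff k).natDegree ≤ (m + n - 1) * d := by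
  by_cases hk : k < n
  · rw [show k = (⟨k, hk⟩ : Fin n) from rfl, coeff_adjSylvester_snd]
    refine natDegree_sum_le_of_forall_le _ _ fun j _ => natDegree_mul_le.trans ?_
    rw [coeff_one]
    split_ifs <;> simpa using natDegree_adjugate_apply_le h _ _
  · have hdeg := mem_degreeLT.1 (adjSylvester f g ⟨1, h1⟩).2.2
    rw [coeff_eq_zero_of_degree_lt (hdeg.trans_le (by exact_mod_cast not_lt.1 hk)), natDegree_zero]
    exact Nat.zero_le _

end

theorem exists_s_eq_discriminant_div_partialQ_general {R : Type*} [CommRing R]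
    (Q : Polynomial (Polynomial R)) (dx dy : ℕ) (hdx : 1 ≤ dx)
    (hdeg : Q.natDegree = dx)
    (hcoeff : ∀ k, (Q.coeff k).natDegree ≤ dy)
    (Δ : Polynomial R) (hΔ : Δ = _root_.resultant Q (Polynomial.derivative Q) dx (dx - 1)) :
    ∃ s : Polynomial (Polynomial R),
      s.natDegree ≤ dx - 1 ∧
      (∀ k, (s.coeff k).natDegree ≤ 2 * (dx - 1) * dy) ∧
      s * Polynomial.derivative Q - Polynomial.C Δ ∈
        Ideal.span ({Q} : Set (Polynomial (Polynomial R))) := by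
  have hQ' : (derivative Q).natDegree ≤ dx - 1 := hdeg ▸ natDegree_derivative_le Q
  have hΔ' : Δ = Polynomial.resultant (derivative Q) Q (dx - 1) dx := by
    rw [hΔ, _root_.resultant, sylvesterMatrix_eq_sylvester hdeg.le hQ', Polynomial.resultant]
  have h1 : (1 : R[X][X]) ∈ R[X][X]_(dx - 1 + dx) :=
    mem_degreeLT.2 (degree_one_le.trans_lt (by exact_mod_cast (by omega : 0 < dx - 1 + dx)))
  set v := adjSylvester (derivative Q) Q ⟨1, h1⟩
  have hv : derivative Q * v.2 + Q * v.1 = C Δ := by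
    have := congr(($(sylveserMap_comp_adjSylvester _ _ hQ' hdeg.le) ⟨1, h1⟩).1)
    simpa [hΔ', Algebra.smul_def] using this
  refine ⟨v.2, ?_, fun k => ?_, Ideal.mem_span_singleton'.2 ⟨-v.1, ?_⟩⟩
  · have hv₂ := mem_degreeLT.1 v.2.2
    exact natDegree_le_pred (natDegree_le_of_degree_le hv₂.le) (coeff_eq_zero_of_degree_lt hv₂)
  · have := natDegree_coeff_adjSylvester_one_snd_le
      (natDegree_sylvester_apply_le (natDegree_coeff_derivative_le hcoeff) hcoeff _ _) h1 k
    rwa [show dx - 1 + dx - 1 = 2 * (dx - 1) by omega] at this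
  · rw [← hv]; ring

/-- **Existence of `s = Δ(x)/(∂Q/∂y)` with degree bounds** (Propositions 2.4 and 4.1 of
the paper).  If `Q ∈ R[x][y]` is monic in `y` of degree `d_x ≥ 1` with all `x`-degrees of
its coefficients at most `d_y`, and `Δ(x)` is the resultant of `Q` and `∂Q/∂y` with
respect to `y`, then there is `s ∈ R[x,y]` with `deg_y s ≤ d_x - 1`,
`deg_x s ≤ 2(d_x-1)·d_y`, and `s · (∂Q/∂y) ≡ Δ(x) mod (Q)`. -/
theorem exists_s_eq_discriminant_div_partialQ {R : Type*} [CommRing R]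
    (Q : Polynomial (Polynomial R)) (dx dy : ℕ) (hdx : 1 ≤ dx)
    (hQ : Q.Monic) (hdeg : Q.natDegree = dx)
    (hcoeff : ∀ k, (Q.coeff k).natDegree ≤ dy)
    (Δ : Polynomial R) (hΔ : Δ = _root_.resultant Q (Polynomial.derivative Q) dx (dx - 1)) :
    ∃ s : Polynomial (Polynomial R),
      s.natDegree ≤ dx - 1 ∧
      (∀ k, (s.coeff k).natDegree ≤ 2 * (dx - 1) * dy) ∧
      s * Polynomial.derivative Q - Polynomial.C Δ ∈
        Ideal.span ({Q} : Set (Polynomial (Polynomial R))) :=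
  exists_s_eq_discriminant_div_partialQ_general Q dx dy hdx hdeg hcoeff Δ hΔ
end

section
/- Let p be a prime number, n ≥ 1 and g ≥ 1 integers, and set q = p^n. Call a polynomial χ ∈ ℤ[T] a Weil q-polynomial of genus g if χ has degree 2g, χ(0) = 1, every complex root z of χ satisfies |z| = q^{-1/2}, and q^g·T^{2g}·χ(1/(qT)) = χ(T) (the inverse roots of χ are permuted by t ↦ q/t). Let N₀ = max over 1 ≤ i ≤ g of (⌊log_p(4g/i) + n·i/2⌋ + 1), where log_p denotes the real logarithm to base p. If χ₁ and χ₂ are two Weil q-polynomials of genus g all of whose corresponding coefficients are congruent modulo p^{N₀}, then χ₁ = χ₂. -/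
/-! Over `ℂ` write `χ(T) = ∏ (1 - αᵢ T)` with `|αᵢ| = √q`, so that `(-1)ᵏ χₖ` is the `k`-th
elementary symmetric function of the `αᵢ`. By Newton's identities, if `χ₁` and `χ₂` agree in all
degrees `< k`, then `k (χ₁ₖ - χ₂ₖ) = ±(pₖ(α) - pₖ(β))` for the power sums `pₖ`, whence
`k |χ₁ₖ - χ₂ₖ| ≤ 4g q^{k/2}`. For `k ≤ g` this is `< k p^{N₀}` by the choice of `N₀`, so the
congruence forces `χ₁ₖ = χ₂ₖ`; the functional equation recovers the coefficients of degree `> g`. -/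

open Polynomial

/-- A *Weil `q`-polynomial of genus `g`*: `χ ∈ ℤ[T]` has degree `2g`, constant term `1`,
all complex roots of absolute value `q^(-1/2)` (i.e. all inverse roots of absolute value
`q^(1/2)`), and its coefficients satisfy the functional equation
`q^g · T^{2g} · χ(1/(qT)) = χ(T)`, i.e. `χ.coeff i * q^g = χ.coeff (2g - i) * q^i`
for all `0 ≤ i ≤ 2g`. -/
def IsWeilPolynomial (q g : ℕ) (χ : Polynomial ℤ) : Prop :=
  χ.natDegree = 2 * g ∧
  χ.coeff 0 = 1 ∧
  (∀ z : ℂ, Polynomial.aeval z χ = 0 → ‖z‖ = (q : ℝ) ^ (-(1 : ℝ) / 2)) ∧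
  (∀ i ≤ 2 * g, χ.coeff i * (q : ℤ) ^ g = χ.coeff (2 * g - i) * (q : ℤ) ^ i)

def Multiset.powerSum {R : Type*} [Semiring R] (s : Multiset R) (k : ℕ) : R := (s.map (· ^ k)).sum

section CommRing

variable {R : Type*} [CommRing R]

theorem Multiset.powerSum_eq_mul_esymm_sub_sum (s : Multiset R) {k : ℕ} (hk : 0 < k) :
    s.powerSum k = (-1) ^ (k + 1) * k * s.esymm k -
      ∑ a ∈ Finset.HasAntidiagonal.antidiagonal k with a.1 ∈ Set.Ioo 0 k,
        (-1) ^ a.1 * s.esymm a.1 * s.powerSum a.2 := by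
  classical
  have aeval_esymm (j : ℕ) :
      MvPolynomial.aeval (fun x : s ↦ (x : R)) (MvPolynomial.esymm s R j) = s.esymm j := by
    rw [MvPolynomial.aeval_esymm_eq_multiset_esymm, Multiset.map_univ_coe]
  have aeval_psum (j : ℕ) :
      MvPolynomial.aeval (fun x : s ↦ (x : R)) (MvPolynomial.psum s R j) = s.powerSum j := by
    rw [Multiset.powerSum, ← Multiset.map_univ s (· ^ j), MvPolynomial.psum, map_sum]
    simp only [map_pow, MvPolynomial.aeval_X]
    rfl
  simpa only [map_sub, map_mul, map_pow, map_neg, map_one, map_natCast, map_sum, aeval_esymm,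
    aeval_psum] using congrArg (MvPolynomial.aeval (fun x : s ↦ (x : R)))
      (MvPolynomial.psum_eq_mul_esymm_sub_sum s R k hk)

theorem Multiset.powerSum_sub_powerSum_eq (s t : Multiset R) {k : ℕ} (hk : 0 < k)
    (h : ∀ j < k, s.esymm j = t.esymm j) :
    s.powerSum k - t.powerSum k = (-1) ^ (k + 1) * k * (s.esymm k - t.esymm k) := by
  induction k using Nat.strong_induction_on with
  | _ k ih =>
  have powerSum_eq (j : ℕ) (hj0 : 0 < j) (hjk : j < k) : s.powerSum j = t.powerSum j := by
    rw [← sub_eq_zero, ih j hjk hj0 fun i hi ↦ h i (hi.trans hjk), h j hjk, sub_self, mul_zero]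
  rw [s.powerSum_eq_mul_esymm_sub_sum hk, t.powerSum_eq_mul_esymm_sub_sum hk]
  have sum_eq : ∑ a ∈ Finset.HasAntidiagonal.antidiagonal k with a.1 ∈ Set.Ioo 0 k,
        (-1) ^ a.1 * s.esymm a.1 * s.powerSum a.2 =
      ∑ a ∈ Finset.HasAntidiagonal.antidiagonal k with a.1 ∈ Set.Ioo 0 k,
        (-1) ^ a.1 * t.esymm a.1 * t.powerSum a.2 := by
    refine Finset.sum_congr rfl fun a ha ↦ ?_
    simp only [Finset.mem_filter, Finset.HasAntidiagonal.mem_antidiagonal, Set.mem_Ioo] at ha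
    rw [h a.1 ha.2.2, powerSum_eq a.2 (by omega) (by omega)]
  rw [sum_eq]
  ring

end CommRing

theorem Multiset.norm_powerSum_le {K : Type*} [NormedField K] (s : Multiset K) {c : ℝ}
    (hs : ∀ z ∈ s, ‖z‖ ≤ c) (k : ℕ) : ‖s.powerSum k‖ ≤ Multiset.card s * c ^ k := by
  calc ‖s.powerSum k‖ ≤ (s.map fun z ↦ ‖z‖ ^ k).sum := by
        simpa [Multiset.powerSum, Multiset.map_map] using norm_multiset_sum_le (s.map (· ^ k))
    _ ≤ (s.map fun _ ↦ c ^ k).sum :=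
        Multiset.sum_map_le_sum_map _ _ fun z hz ↦ pow_le_pow_left₀ (norm_nonneg z) (hs z hz) k
    _ = Multiset.card s * c ^ k := by simp

theorem Polynomial.natDegree_reverse_of_coeff_zero_ne_zero {R : Type*} [Semiring R] {f : R[X]}
    (h : f.coeff 0 ≠ 0) : f.reverse.natDegree = f.natDegree := by
  rw [reverse_natDegree, natTrailingDegree_eq_zero.mpr (Or.inr h), Nat.sub_zero]

theorem Polynomial.coeff_eq_neg_one_pow_mul_esymm_roots_reverse {K : Type*} [Field K] {f : K[X]}
    (h0 : f.coeff 0 = 1) (hsplit : f.reverse.Splits) {k : ℕ} (hk : k ≤ f.natDegree) :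
    f.coeff k = (-1) ^ k * f.reverse.roots.esymm k := by
  have h0' : f.coeff 0 ≠ 0 := by simp [h0]
  have hdeg := natDegree_reverse_of_coeff_zero_ne_zero h0'
  have hlead : f.reverse.leadingCoeff = 1 := by
    rw [reverse_leadingCoeff, trailingCoeff_eq_coeff_zero h0', h0]
  have vieta := coeff_eq_esymm_roots_of_splits hsplit (k := f.natDegree - k) (by omega)
  rwa [coeff_reverse, revAt_le (by omega), Nat.sub_sub_self hk, hlead, hdeg, Nat.sub_sub_self hk,
    one_mul] at vieta

theorem Polynomial.isRoot_inv_of_mem_roots_reverse {K : Type*} [Field K] {f : K[X]} {z : K}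
    (hz : z ∈ f.reverse.roots) : f.IsRoot z⁻¹ := by
  obtain ⟨hne, hroot⟩ := mem_roots'.mp hz
  have hz0 : z ≠ 0 := by
    rintro rfl
    rw [IsRoot, ← coeff_zero_eq_eval_zero, coeff_zero_reverse, leadingCoeff_eq_zero,
      ← reverse_eq_zero] at hroot
    exact hne hroot
  have : Invertible z⁻¹ := invertibleOfNonzero (inv_ne_zero hz0)
  refine (eval₂_reverse_eq_zero_iff (RingHom.id K) z⁻¹ f).mp ?_
  rwa [invOf_eq_inv, inv_inv]

namespace IsWeilPolynomial

variable {q g : ℕ} {χ χ₁ χ₂ : ℤ[X]}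

theorem exists_inverse_roots (hχ : IsWeilPolynomial q g χ) :
    ∃ s : Multiset ℂ, Multiset.card s = 2 * g ∧ (∀ z ∈ s, ‖z‖ = √q) ∧
      ∀ k ≤ 2 * g, (χ.coeff k : ℂ) = (-1) ^ k * s.esymm k := by
  obtain ⟨hdeg, hcoeff0, hroots, -⟩ := hχ
  set f := χ.map (Int.castRingHom ℂ)
  have hfdeg : f.natDegree = 2 * g := by
    rw [natDegree_map_eq_of_injective (RingHom.injective_int _), hdeg]
  have hf0 : f.coeff 0 = 1 := by simp [f, hcoeff0]
  have hsplit := IsAlgClosed.splits f.reverse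
  refine ⟨f.reverse.roots, ?_, fun z hz ↦ ?_, fun k hk ↦ ?_⟩
  · rw [splits_iff_card_roots.mp hsplit, natDegree_reverse_of_coeff_zero_ne_zero (by simp [hf0]),
      hfdeg]
  · have hinv := hroots z⁻¹ <| by
      simpa [f, aeval_def, eval_map] using isRoot_inv_of_mem_roots_reverse hz
    rw [norm_inv, neg_div, Real.rpow_neg (Nat.cast_nonneg q), ← Real.sqrt_eq_rpow] at hinv
    exact inv_injective hinv
  · simpa [f] using coeff_eq_neg_one_pow_mul_esymm_roots_reverse hf0 hsplit (hfdeg ▸ hk)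

theorem mul_abs_coeff_sub_le (h₁ : IsWeilPolynomial q g χ₁) (h₂ : IsWeilPolynomial q g χ₂)
    {k : ℕ} (hk0 : 0 < k) (hk : k ≤ 2 * g) (hlt : ∀ j < k, χ₁.coeff j = χ₂.coeff j) :
    k * |((χ₁.coeff k - χ₂.coeff k : ℤ) : ℝ)| ≤ 4 * g * √q ^ k := by
  obtain ⟨s₁, hcard₁, hnorm₁, hcoeff₁⟩ := h₁.exists_inverse_roots
  obtain ⟨s₂, hcard₂, hnorm₂, hcoeff₂⟩ := h₂.exists_inverse_roots
  have esymm_eq {s : Multiset ℂ} {χ : ℤ[X]}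
      (hcoeff : ∀ j ≤ 2 * g, (χ.coeff j : ℂ) = (-1) ^ j * s.esymm j) (j : ℕ) (hj : j ≤ 2 * g) :
      s.esymm j = (-1) ^ j * χ.coeff j := by
    rw [hcoeff j hj, ← mul_assoc, ← mul_pow]
    simp
  have newton := s₁.powerSum_sub_powerSum_eq s₂ hk0 fun j hj ↦ by
    rw [esymm_eq hcoeff₁ j (by omega), esymm_eq hcoeff₂ j (by omega), hlt j hj]
  rw [esymm_eq hcoeff₁ k hk, esymm_eq hcoeff₂ k hk] at newton
  have hnorm : ‖s₁.powerSum k - s₂.powerSum k‖ = k * |((χ₁.coeff k - χ₂.coeff k : ℤ) : ℝ)| := by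
    rw [newton, ← mul_sub, ← Int.cast_sub]
    simp only [norm_mul, norm_pow, norm_neg, norm_one, one_pow, one_mul, Complex.norm_natCast,
      Complex.norm_intCast]
  calc (k : ℝ) * |((χ₁.coeff k - χ₂.coeff k : ℤ) : ℝ)|
      = ‖s₁.powerSum k - s₂.powerSum k‖ := hnorm.symm
    _ ≤ ‖s₁.powerSum k‖ + ‖s₂.powerSum k‖ := norm_sub_le _ _
    _ ≤ 2 * g * √q ^ k + 2 * g * √q ^ k := by
        gcongr
        · simpa [hcard₁] using s₁.norm_powerSum_le (fun z hz ↦ (hnorm₁ z hz).le) k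
        · simpa [hcard₂] using s₂.norm_powerSum_le (fun z hz ↦ (hnorm₂ z hz).le) k
    _ = 4 * g * √q ^ k := by ring

theorem coeff_eq_of_dvd_sub (h₁ : IsWeilPolynomial q g χ₁) (h₂ : IsWeilPolynomial q g χ₂) {M : ℤ}
    (hM : ∀ k, 0 < k → k ≤ g → 4 * g * √q ^ k < k * M)
    (hdvd : ∀ k, M ∣ χ₁.coeff k - χ₂.coeff k) {k : ℕ} (hk : k ≤ g) :
    χ₁.coeff k = χ₂.coeff k := by
  induction k using Nat.strong_induction_on with
  | _ k ih =>
  rcases Nat.eq_zero_or_pos k with rfl | hk0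
  · rw [h₁.2.1, h₂.2.1]
  have hbound := h₁.mul_abs_coeff_sub_le h₂ hk0 (by omega) fun j hj ↦ ih j hj (by omega)
  have habs : |χ₁.coeff k - χ₂.coeff k| < M := by
    have : (k : ℝ) * |((χ₁.coeff k - χ₂.coeff k : ℤ) : ℝ)| < k * M := hbound.trans_lt (hM k hk0 hk)
    exact_mod_cast lt_of_mul_lt_mul_left this (Nat.cast_nonneg k)
  exact sub_eq_zero.mp (Int.eq_zero_of_abs_lt_dvd (hdvd k) habs)

theorem eq_of_coeff_eq_of_le (hq : 0 < q) (h₁ : IsWeilPolynomial q g χ₁)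
    (h₂ : IsWeilPolynomial q g χ₂)     (h : ∀ k ≤ g, χ₁.coeff k = χ₂.coeff k) : χ₁ = χ₂ := by
  ext k
  rcases le_or_gt k g with hkg | hgk
  · exact h k hkg
  rcases le_or_gt k (2 * g) with hk | hk
  · have e₁ := h₁.2.2.2 (2 * g - k) (by omega)
    have e₂ := h₂.2.2.2 (2 * g - k) (by omega)
    rw [Nat.sub_sub_self hk, h (2 * g - k) (by omega)] at e₁
    rw [Nat.sub_sub_self hk, e₁] at e₂
    exact mul_right_cancel₀ (pow_ne_zero _ (by exact_mod_cast hq.ne')) e₂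
  · rw [coeff_eq_zero_of_natDegree_lt (h₁.1 ▸ hk), coeff_eq_zero_of_natDegree_lt (h₂.1 ▸ hk)]

end IsWeilPolynomial

theorem Real.mul_sqrt_pow_lt_of_floor_logb_lt {b c : ℝ} {n k N : ℕ} (hb : 1 < b) (hc : 0 < c)
    (hk : 0 < k) (hN : ⌊logb b (c / k) + n * k / 2⌋₊ < N) : c * √(b ^ n) ^ k < k * b ^ N := by
  have hb0 : 0 < b := by linarith
  have hsqrt : √(b ^ n) ^ k = b ^ ((n : ℝ) * k / 2) := by
    rw [Real.sqrt_eq_rpow, ← Real.rpow_natCast _ k, ← Real.rpow_natCast b n, ← Real.rpow_mul hb0.le,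
      ← Real.rpow_mul hb0.le]
    ring_nf
  have hlt : b ^ (logb b (c / k) + n * k / 2) < b ^ (N : ℝ) :=
    Real.rpow_lt_rpow_of_exponent_lt hb (Nat.lt_of_floor_lt hN)
  rw [Real.rpow_add hb0, Real.rpow_logb hb0 hb.ne' (by positivity), Real.rpow_natCast, ← hsqrt,
    div_mul_eq_mul_div, div_lt_iff₀ (by positivity)] at hlt
  linarith

theorem weil_polynomial_determined_by_padic_approximation_general
    (p n g : ℕ) (hp : p.Prime)
    (q : ℕ) (hq : q = p ^ n)
    (N₀ : ℕ)
    (hN₀ : N₀ = (Finset.Icc 1 g).sup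
      (fun i => ⌊Real.logb p ((4 * g : ℝ) / (i : ℝ)) + (n : ℝ) * (i : ℝ) / 2⌋₊ + 1))
    (χ₁ χ₂ : Polynomial ℤ)
    (h₁ : IsWeilPolynomial q g χ₁) (h₂ : IsWeilPolynomial q g χ₂)
    (hcong : ∀ k, (p : ℤ) ^ N₀ ∣ χ₁.coeff k - χ₂.coeff k) :
    χ₁ = χ₂ := by
  subst hq
  refine h₁.eq_of_coeff_eq_of_le (pow_pos hp.pos n) h₂ fun k hk ↦
    h₁.coeff_eq_of_dvd_sub h₂ (fun k hk0 hkg ↦ ?_) hcong hk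
  have hfloor : ⌊Real.logb p ((4 * g : ℝ) / k) + n * k / 2⌋₊ < N₀ := by
    rw [hN₀]
    exact Finset.le_sup (f := fun i : ℕ ↦ ⌊Real.logb p ((4 * g : ℝ) / i) + n * i / 2⌋₊ + 1)
      (Finset.mem_Icc.mpr ⟨hk0, hkg⟩)
  have hg0 : (0 : ℝ) < 4 * g := mul_pos four_pos (Nat.cast_pos.mpr (by omega))
  simpa using Real.mul_sqrt_pow_lt_of_floor_logb_lt (by exact_mod_cast hp.one_lt) hg0 hk0 hfloor

/-- **`p`-adic precision needed to recover the numerator of the zeta function**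
(Proposition 5.2 of the paper).  Two Weil `q`-polynomials of genus `g` whose
coefficients are congruent modulo
`p^(N₀)`, where `N₀ = max_{1 ≤ i ≤ g} (⌊log_p(4g/i) + n·i/2⌋ + 1)`, are equal. -/
theorem weil_polynomial_determined_by_padic_approximation
    (p n g : ℕ) (hp : p.Prime) (hn : 1 ≤ n) (hg : 1 ≤ g)
    (q : ℕ) (hq : q = p ^ n)
    (N₀ : ℕ)
    (hN₀ : N₀ = (Finset.Icc 1 g).sup
      (fun i => ⌊Real.logb p ((4 * g : ℝ) / (i : ℝ)) + (n : ℝ) * (i : ℝ) / 2⌋₊ + 1))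
    (χ₁ χ₂ : Polynomial ℤ)
    (h₁ : IsWeilPolynomial q g χ₁) (h₂ : IsWeilPolynomial q g χ₂)
    (hcong : ∀ k, (p : ℤ) ^ N₀ ∣ χ₁.coeff k - χ₂.coeff k) :
    χ₁ = χ₂ :=
  weil_polynomial_determined_by_padic_approximation_general p n g hp q hq N₀ hN₀ χ₁ χ₂ h₁ h₂ hcong
end
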